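/- arXiv:2006.10641 — 6 statements merged into one kernel-verified Lean document; each statement's English description precedes it below -/
import Mathlib

section
/- Let G be a finite simple graph with vertex set 𝒳 and adjacency relation A. Define 𝒰(i,j) = 0 if i = j or i is adjacent to j in G, and 𝒰(i,j) = −1 otherwise. Then for every n, the sender graph G_sⁿ induced by 𝒰 (distinct x,y adjacent iff ∑ₖ𝒰(xₖ,yₖ) ≥ 0 or ∑ₖ𝒰(yₖ,xₖ) ≥ 0) equals the n-fold strong product G^{⊠n}. Consequently Ξ(𝒰) = Θ(G), the Shannon capacity of G. -/
open Finset Filter Real Topology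

/-- Sender graph induced by utility `U` on `n`-length sequences: distinct `x, y`
are adjacent iff the total (equivalently, average) utility is nonnegative in one direction. -/
def senderGraph {X : Type*} (U : X → X → ℝ) (n : ℕ) : SimpleGraph (Fin n → X) where
  Adj x y := x ≠ y ∧ (0 ≤ ∑ k, U (y k) (x k) ∨ 0 ≤ ∑ k, U (x k) (y k))
  symm := ⟨fun x y h => ⟨h.1.symm, h.2.symm⟩⟩
  loopless := ⟨fun x h => h.1 rfl⟩

/-- Base sender graph on the alphabet itself. -/
def baseGraph {X : Type*} (U : X → X → ℝ) : SimpleGraph X where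
  Adj i j := i ≠ j ∧ (0 ≤ U i j ∨ 0 ≤ U j i)
  symm := ⟨fun i j h => ⟨h.1.symm, h.2.symm⟩⟩
  loopless := ⟨fun i h => h.1 rfl⟩

/-- `n`-fold strong product (strong power) of a graph. -/
def strongPow {V : Type*} (G : SimpleGraph V) (n : ℕ) : SimpleGraph (Fin n → V) where
  Adj x y := x ≠ y ∧ ∀ k, x k = y k ∨ G.Adj (x k) (y k)
  symm := ⟨fun x y h => ⟨h.1.symm, fun k => (h.2 k).imp Eq.symm SimpleGraph.Adj.symm⟩⟩
  loopless := ⟨fun x h => h.1 rfl⟩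

/-- Independence number of a graph: the largest size of a set of pairwise
non-adjacent vertices. -/
noncomputable def indepNum {V : Type*} (G : SimpleGraph V) : ℕ :=
  sSup {m | ∃ s : Finset V, s.card = m ∧ ∀ x ∈ s, ∀ y ∈ s, ¬ G.Adj x y}

/-- The sequence `n ↦ α(G_s^n)^{1/n}` whose limit is the information
extraction capacity `Ξ(U)`. -/
noncomputable def capSeq {X : Type*} (U : X → X → ℝ) (n : ℕ) : ℝ :=
  (indepNum (senderGraph U n) : ℝ) ^ (1 / (n : ℝ))

/- A nonpositive utility has nonnegative total exactly when every summand vanishes, so the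
sender graph of `U` only sees the zero set of `U`; for the utility built from `G` that zero
set is "equal or adjacent", which is the coordinatewise condition of the strong power. -/

theorem sum_nonneg_iff_forall_eq_zero_of_nonpos {ι N : Type*} [Fintype ι] [AddCommMonoid N]
    [PartialOrder N] [IsOrderedAddMonoid N] {f : ι → N} (hf : ∀ i, f i ≤ 0) :
    0 ≤ ∑ i, f i ↔ ∀ i, f i = 0 := by
  rw [(Finset.sum_nonpos fun i _ => hf i).ge_iff_eq,
    Finset.sum_eq_zero_iff_of_nonpos fun i _ => hf i]
  simp only [Finset.mem_univ, true_implies]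

theorem senderGraph_eq_strongPow {X : Type*} (G : SimpleGraph X) {U : X → X → ℝ}
    (hU : ∀ i j, U i j ≤ 0) (hU0 : ∀ i j, U i j = 0 ↔ i = j ∨ G.Adj i j) (n : ℕ) :
    senderGraph U n = strongPow G n := by
  have hzero_symm : ∀ i j, U i j = 0 ↔ U j i = 0 := fun i j => by
    rw [hU0, hU0, eq_comm, G.adj_comm]
  ext x y
  change x ≠ y ∧ (0 ≤ ∑ k, U (y k) (x k) ∨ 0 ≤ ∑ k, U (x k) (y k)) ↔
    x ≠ y ∧ ∀ k, x k = y k ∨ G.Adj (x k) (y k)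
  simp only [sum_nonneg_iff_forall_eq_zero_of_nonpos fun _ => hU _ _, hzero_symm (y _), or_self, hU0]

theorem senderGraph_eq_strongPow_of_graph_utility_general {X : Type*}
    (G : SimpleGraph X) (U : X → X → ℝ)
    (hU0 : ∀ i j, (i = j ∨ G.Adj i j) → U i j = 0)
    (hU1 : ∀ i j, ¬(i = j ∨ G.Adj i j) → U i j = -1) :
    (∀ n, senderGraph U n = strongPow G n) ∧
    ∀ L : ℝ,
      Filter.Tendsto (capSeq U) Filter.atTop (nhds L) ↔
      Filter.Tendsto
        (fun n : ℕ => (indepNum (strongPow G n) : ℝ) ^ (1 / (n : ℝ)))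
        Filter.atTop (nhds L) := by
  have hU : ∀ i j, U i j ≤ 0 := fun i j => by
    by_cases h : i = j ∨ G.Adj i j
    · exact (hU0 i j h).le
    · rw [hU1 i j h]; norm_num
  have hzero : ∀ i j, U i j = 0 ↔ i = j ∨ G.Adj i j := fun i j =>
    ⟨fun h => by_contra fun hc => by norm_num [hU1 i j hc] at h, hU0 i j⟩
  have heq := senderGraph_eq_strongPow G hU hzero
  have hcap : capSeq U = fun n : ℕ => (indepNum (strongPow G n) : ℝ) ^ (1 / (n : ℝ)) := by
    funext n
    rw [capSeq, heq]
  exact ⟨heq, fun L => by rw [hcap]⟩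

/-- For the utility which is `0` on the diagonal and on edges of `G`, and `-1`
otherwise, the sender graph `G_s^n` equals the strong power `G^{⊠n}`; hence the
information extraction capacity `Ξ(U)` equals the Shannon capacity `Θ(G)`. -/
theorem senderGraph_eq_strongPow_of_graph_utility {X : Type*} [Fintype X]
    (G : SimpleGraph X) (U : X → X → ℝ)
    (hU0 : ∀ i j, (i = j ∨ G.Adj i j) → U i j = 0)
    (hU1 : ∀ i j, ¬(i = j ∨ G.Adj i j) → U i j = -1) :
    (∀ n, senderGraph U n = strongPow G n) ∧
    ∀ L : ℝ,
      Filter.Tendsto (capSeq U) Filter.atTop (nhds L) ↔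
      Filter.Tendsto
        (fun n : ℕ => (indepNum (strongPow G n) : ℝ) ^ (1 / (n : ℝ)))
        Filter.atTop (nhds L) :=
  senderGraph_eq_strongPow_of_graph_utility_general G U hU0 hU1
end

section
/- Let 𝒳 be a finite alphabet, 𝒰 a utility with zero diagonal, and 𝒴 ⊆ 𝒳 a subset such that for every non-identity |𝒴| × |𝒴| permutation matrix Q (indexed by 𝒴), ∑_{i,j∈𝒴} Q(i,j)𝒰(i,j) < 0. Then for every K ∈ ℕ, the uniform type class T_𝒴^K (sequences of length K|𝒴| in which each symbol of 𝒴 appears exactly K times) is an independent set in the sender graph G_s^{K|𝒴|}. -/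
/-!
If `x ≠ y` both lie in `T_Y^K`, their joint type, multiplied by `|Y|`, is a doubly stochastic
matrix other than the identity. By Birkhoff–von Neumann it is a convex combination of permutation
matrices in which some non-identity permutation `σ` has positive weight. The total utility
`∑ₖ U(yₖ, xₖ)` is `K` times the same combination of the permutation sums `∑ⱼ U(σ j, j)`, which are
`≤ 0` and `< 0` for that `σ`; so the utility is negative in both directions.
-/

open Finset Filter Real Topology

open Matrix Equiv

lemma Equiv.Perm.trace_permMatrix_mul {ι R : Type*} [Fintype ι] [DecidableEq ι]
    [NonAssocSemiring R] (σ : Perm ι) (c : Matrix ι ι R) :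
    (σ.permMatrix R * c).trace = ∑ i, c (σ i) i := by
  rw [PEquiv.toMatrix_toPEquiv_mul]
  rfl

section Birkhoff

variable {ι R : Type*} [Fintype ι] [DecidableEq ι]

lemma exists_weight_ne_zero_of_sum_smul_permMatrix_ne_one [Semiring R] {w : Perm ι → R}
    (hw : ∑ σ, w σ = 1) (hM : ∑ σ, w σ • σ.permMatrix R ≠ 1) : ∃ σ ≠ 1, w σ ≠ 0 := by
  by_contra! h
  have hw1 : w 1 = 1 := by rwa [Finset.sum_eq_single 1 (fun σ _ => h σ) (by simp)] at hw
  refine hM ?_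
  rw [Finset.sum_eq_single 1 (fun σ _ hσ => by simp [h σ hσ]) (by simp)]
  simp [hw1]

variable [Field R] [LinearOrder R] [IsStrictOrderedRing R]

theorem trace_mul_neg_of_mem_doublyStochastic {M c : Matrix ι ι R}
    (hM : M ∈ doublyStochastic R ι) (hM1 : M ≠ 1) (hc1 : c.trace ≤ 0)
    (hc : ∀ σ : Perm ι, σ ≠ 1 → ∑ i, c (σ i) i < 0) : (M * c).trace < 0 := by
  obtain ⟨w, hw0, hw1, rfl⟩ := exists_eq_sum_perm_of_mem_doublyStochastic hM
  obtain ⟨τ, hτ1, hτ⟩ := exists_weight_ne_zero_of_sum_smul_permMatrix_ne_one hw1 hM1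
  have hperm : ∀ σ : Perm ι, (σ.permMatrix R * c).trace ≤ 0 := fun σ => by
    rcases eq_or_ne σ 1 with rfl | hσ
    · simpa using hc1
    · exact (Perm.trace_permMatrix_mul σ c ▸ hc σ hσ).le
  simp only [Finset.sum_mul, trace_sum, smul_mul, trace_smul, smul_eq_mul]
  refine Finset.sum_neg' (fun σ _ => mul_nonpos_of_nonneg_of_nonpos (hw0 σ) (hperm σ))
    ⟨τ, Finset.mem_univ _, mul_neg_of_pos_of_neg ((hw0 τ).lt_of_ne' hτ) ?_⟩
  exact Perm.trace_permMatrix_mul τ c ▸ hc τ hτ1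

end Birkhoff

section JointType

variable {α ι : Type*} [Fintype α] [DecidableEq ι]

/-- The joint type `P_{x,y}` of the paper, scaled by the length. -/
def jointCount (x y : α → ι) : Matrix ι ι ℕ := fun i j => #{k | x k = i ∧ y k = j}

lemma jointCount_pos (x y : α → ι) (k : α) : 0 < jointCount x y (x k) (y k) :=
  Finset.card_pos.mpr ⟨k, by simp⟩

variable [Fintype ι] (x y : α → ι)

lemma sum_jointCount_row (i : ι) : ∑ j, jointCount x y i j = #{k | x k = i} := by
  rw [Finset.card_eq_sum_card_fiberwise (f := y) (t := univ) (fun _ _ => mem_univ _)]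
  simp only [jointCount, Finset.filter_filter]

lemma sum_jointCount_col (j : ι) : ∑ i, jointCount x y i j = #{k | y k = j} := by
  rw [Finset.card_eq_sum_card_fiberwise (f := x) (t := univ) (fun _ _ => mem_univ _)]
  simp only [jointCount, Finset.filter_filter, and_comm]

lemma sum_apply_eq_trace_jointCount_mul {R : Type*} [Semiring R] (c : Matrix ι ι R) :
    ∑ k, c (y k) (x k) = ((jointCount x y).map (Nat.cast : ℕ → R) * c).trace := by
  rw [← Finset.sum_fiberwise' univ (fun k => (x k, y k)) (fun p => c p.2 p.1),
    Fintype.sum_prod_type]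
  simp only [trace, Matrix.diag, mul_apply, map_apply, jointCount, Finset.sum_const, Prod.mk.injEq,
    nsmul_eq_mul]

end JointType

section UniformType

variable {α ι R : Type*} [Fintype α] [Fintype ι] [DecidableEq ι]
  [Field R] [LinearOrder R] [IsStrictOrderedRing R]

theorem sum_apply_neg_of_card_fiber_eq {K : ℕ} {x y : α → ι}
    (hx : ∀ i, #{k | x k = i} = K) (hy : ∀ i, #{k | y k = i} = K) (hxy : x ≠ y)
    {c : Matrix ι ι R} (hc1 : c.trace ≤ 0) (hc : ∀ σ : Perm ι, σ ≠ 1 → ∑ i, c (σ i) i < 0) :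
    ∑ k, c (y k) (x k) < 0 := by
  obtain ⟨k, hk⟩ := Function.ne_iff.1 hxy
  have hK : 0 < K := hx (x k) ▸ Finset.card_pos.2 ⟨k, by simp⟩
  obtain ⟨M, hM, hNM⟩ := (exists_mem_doublyStochastic_eq_smul_iff
    (M := (jointCount x y).map (Nat.cast : ℕ → R)) (Nat.cast_nonneg K)).2
    ⟨fun i j => Nat.cast_nonneg _,
      fun i => by simp only [map_apply, ← Nat.cast_sum, sum_jointCount_row, hx],
      fun j => by simp only [map_apply, ← Nat.cast_sum, sum_jointCount_col, hy]⟩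
  have hM1 : M ≠ 1 := by
    rintro rfl
    have hcount := congr_fun₂ hNM (x k) (y k)
    simp only [map_apply, Matrix.smul_apply, one_apply_ne hk, smul_zero, Nat.cast_eq_zero] at hcount
    exact (jointCount_pos x y k).ne' hcount
  rw [sum_apply_eq_trace_jointCount_mul, hNM, smul_mul, trace_smul, smul_eq_mul]
  exact mul_neg_of_pos_of_neg (Nat.cast_pos.2 hK)
    (trace_mul_neg_of_mem_doublyStochastic hM hM1 hc1 hc)

end UniformType

/-- The uniform type class `T_Y^K` of the paper. -/
def uniformTypeClass {α X : Type*} [Fintype α] [DecidableEq X] (Y : Finset X) (K : ℕ) :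
    Set (α → X) :=
  {x | (∀ k, x k ∈ Y) ∧ ∀ a ∈ Y, #{k | x k = a} = K}

theorem sum_neg_of_mem_uniformTypeClass {α X : Type*} [Fintype α] [DecidableEq X]
    {U : X → X → ℝ} (hdiag : ∀ i, U i i = 0) {Y : Finset X}
    (hY : ∀ σ : Perm Y, σ ≠ 1 → ∑ j : Y, U (σ j) j < 0) {K : ℕ} {x y : α → X}
    (hx : x ∈ uniformTypeClass Y K) (hy : y ∈ uniformTypeClass Y K) (hxy : x ≠ y) :
    ∑ k, U (y k) (x k) < 0 := by
  have hcard (z : α → Y) (hz : ∀ a ∈ Y, #{k | (z k : X) = a} = K) (a : Y) :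
      #{k | z k = a} = K := by
    simpa only [Subtype.ext_iff] using hz a a.2
  refine sum_apply_neg_of_card_fiber_eq (c := fun i j => U i j)
    (hcard (fun k => ⟨x k, hx.1 k⟩) hx.2) (hcard (fun k => ⟨y k, hy.1 k⟩) hy.2) ?_ ?_ hY
  · exact fun h => hxy (funext fun k => congrArg Subtype.val (congr_fun h k))
  · simp [trace, Matrix.diag, hdiag]

theorem typeClass_indep_of_perm_condition_general {X : Type*} [DecidableEq X]
    (U : X → X → ℝ) (hdiag : ∀ i, U i i = 0) (Y : Finset X)
    (hY : ∀ σ : Equiv.Perm {i // i ∈ Y}, σ ≠ 1 →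
      ∑ j : {i // i ∈ Y}, U (σ j : X) (j : X) < 0)
    (K : ℕ) (x y : Fin (K * Y.card) → X)
    (hx : (∀ k, x k ∈ Y) ∧ ∀ a ∈ Y, (Finset.univ.filter fun k => x k = a).card = K)
    (hy : (∀ k, y k ∈ Y) ∧ ∀ a ∈ Y, (Finset.univ.filter fun k => y k = a).card = K) :
    ¬ (senderGraph U (K * Y.card)).Adj x y := by
  rintro ⟨hne, hyx | hxy⟩
  · exact (sum_neg_of_mem_uniformTypeClass hdiag hY hx hy hne).not_ge hyx
  · exact (sum_neg_of_mem_uniformTypeClass hdiag hY hy hx hne.symm).not_ge hxy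

/-- If `Y ⊆ X` satisfies `∑_{i,j∈Y} Q(i,j)U(i,j) < 0` for every non-identity
permutation matrix `Q` on `Y`, then for every `K` the uniform type class
`T_Y^K ⊆ X^{K|Y|}` is an independent set in the sender graph `G_s^{K|Y|}`. -/
theorem typeClass_indep_of_perm_condition {X : Type*} [Fintype X] [DecidableEq X]
    (U : X → X → ℝ) (hdiag : ∀ i, U i i = 0) (Y : Finset X)
    (hY : ∀ σ : Equiv.Perm {i // i ∈ Y}, σ ≠ 1 →
      ∑ j : {i // i ∈ Y}, U (σ j : X) (j : X) < 0)
    (K : ℕ) (x y : Fin (K * Y.card) → X)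
    (hx : (∀ k, x k ∈ Y) ∧ ∀ a ∈ Y, (Finset.univ.filter fun k => x k = a).card = K)
    (hy : (∀ k, y k ∈ Y) ∧ ∀ a ∈ Y, (Finset.univ.filter fun k => y k = a).card = K) :
    ¬ (senderGraph U (K * Y.card)).Adj x y :=
  typeClass_indep_of_perm_condition_general U hdiag Y hY K x y hx hy
end

section
/- Let 𝒰 be a utility with zero diagonal, and define its symmetric part 𝒰^Sym(i,j) = (𝒰(i,j) + 𝒰(j,i))/2 with induced sender graph G_s^Sym. If 𝒴 ⊆ 𝒳 satisfies ∑_{i,j∈𝒴} Q(i,j)𝒰(i,j) < 0 for every non-identity permutation matrix Q on 𝒴, then 𝒴 is an independent set in G_s^Sym. Hence Γ(𝒰) ≤ α(G_s^Sym). -/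
open Finset Filter Real Topology

/-- `Γ(U)`: the maximum size of a set `Y ⊆ X` feasible for the
permutation-matrix optimization `𝒪(U)`. -/
noncomputable def gammaU {X : Type*} [Fintype X] (U : X → X → ℝ) : ℕ :=
  sSup {m | ∃ Y : Finset X, Y.card = m ∧
    ∀ σ : Equiv.Perm {i // i ∈ Y}, σ ≠ 1 →
      ∑ j : {i // i ∈ Y}, U (σ j : X) (j : X) < 0}

/-! The transposition of two distinct points `i, j` of a feasible set `Y` fixes every other
point, so with zero diagonal its objective is `U j i + U i j`; feasibility makes this negative,
which is exactly non-adjacency of `i, j` for the symmetric part. -/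

theorem Equiv.sum_swap_apply_eq_add {α M : Type*} [Fintype α] [DecidableEq α] [AddCommMonoid M]
    {f : α → α → M} (hf : ∀ a, f a a = 0) {a b : α} (hab : a ≠ b) :
    ∑ k, f (Equiv.swap a b k) k = f b a + f a b := by
  rw [Fintype.sum_eq_add a b hab fun k hk => by rw [Equiv.swap_apply_of_ne_of_ne hk.1 hk.2, hf],
    Equiv.swap_apply_left, Equiv.swap_apply_right]

def IsFeasible {X : Type*} (U : X → X → ℝ) (Y : Finset X) : Prop :=
  ∀ σ : Equiv.Perm {i // i ∈ Y}, σ ≠ 1 → ∑ j : {i // i ∈ Y}, U (σ j : X) (j : X) < 0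

theorem IsFeasible.add_neg {X : Type*} {U : X → X → ℝ} (hdiag : ∀ i, U i i = 0)
    {Y : Finset X} (hY : IsFeasible U Y) {i j : X} (hi : i ∈ Y) (hj : j ∈ Y) (hij : i ≠ j) :
    U i j + U j i < 0 := by
  classical
  have hab : (⟨i, hi⟩ : {x // x ∈ Y}) ≠ ⟨j, hj⟩ := Subtype.coe_ne_coe.mp hij
  have h := hY _ (mt Equiv.swap_eq_one_iff.mp hab)
  rwa [Equiv.sum_swap_apply_eq_add (f := fun x y : {x // x ∈ Y} => U x y) (fun _ => hdiag _) hab,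
    add_comm] at h

theorem not_baseGraph_symm_adj_iff {X : Type*} {U : X → X → ℝ} {i j : X} (hij : i ≠ j) :
    ¬ (baseGraph (fun a b => (U a b + U b a) / 2)).Adj i j ↔ U i j + U j i < 0 := by
  simp only [baseGraph, hij, ne_eq, not_false_eq_true, true_and, not_or, not_le, add_comm (U j i)]
  exact ⟨fun h => by linarith [h.1], fun h => ⟨by linarith, by linarith⟩⟩

theorem IsFeasible.indep {X : Type*} {U : X → X → ℝ} (hdiag : ∀ i, U i i = 0)
    {Y : Finset X} (hY : IsFeasible U Y) :
    ∀ i ∈ Y, ∀ j ∈ Y, ¬ (baseGraph (fun a b => (U a b + U b a) / 2)).Adj i j := by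
  intro i hi j hj
  by_cases hij : i = j
  · exact hij ▸ (baseGraph _).loopless.irrefl i
  · exact (not_baseGraph_symm_adj_iff hij).mpr (hY.add_neg hdiag hi hj hij)

theorem gammaU_le_indepNum {X : Type*} [Fintype X] {U : X → X → ℝ} {G : SimpleGraph X}
    (h : ∀ Y, IsFeasible U Y → ∀ i ∈ Y, ∀ j ∈ Y, ¬ G.Adj i j) :
    gammaU U ≤ indepNum G :=
  csSup_le_csSup' ⟨Fintype.card X, fun _ ⟨s, hs, _⟩ => hs ▸ s.card_le_univ⟩
    fun _ ⟨Y, hcard, hY⟩ => ⟨Y, hcard, h Y hY⟩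

/-- If `Y` is feasible for `𝒪(U)`, then `Y` is an independent set in the sender
graph of the symmetric part `U^Sym`; hence `Γ(U) ≤ α(G_s^Sym)`. -/
theorem feasible_indep_symmetric_part {X : Type*} [Fintype X]
    (U : X → X → ℝ) (hdiag : ∀ i, U i i = 0) (Y : Finset X)
    (hY : ∀ σ : Equiv.Perm {i // i ∈ Y}, σ ≠ 1 →
      ∑ j : {i // i ∈ Y}, U (σ j : X) (j : X) < 0) :
    (∀ i ∈ Y, ∀ j ∈ Y, ¬ (baseGraph (fun a b => (U a b + U b a) / 2)).Adj i j) ∧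
    gammaU U ≤ indepNum (baseGraph (fun a b => (U a b + U b a) / 2)) :=
  ⟨IsFeasible.indep hdiag hY, gammaU_le_indepNum fun _ hZ => hZ.indep hdiag⟩
end

section
/- Let 𝒰 be a utility with zero diagonal and 𝒰^Sym(i,j) = (𝒰(i,j) + 𝒰(j,i))/2 its symmetric part. Then for every n, the sender graph of 𝒰^Sym on 𝒳ⁿ is a subgraph of the sender graph of 𝒰 on 𝒳ⁿ, and consequently Ξ(𝒰) ≤ Ξ(𝒰^Sym). -/
open Finset Filter Real Topology

theorem indepNum_anti {V : Type*} [Fintype V] {G H : SimpleGraph V} (h : G ≤ H) :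
    indepNum H ≤ indepNum G := by
  refine csSup_le_csSup ⟨Fintype.card V, ?_⟩ ⟨0, ∅, by simp⟩ ?_
  · rintro m ⟨s, rfl, -⟩
    exact s.card_le_univ
  · rintro m ⟨s, hs, hind⟩
    exact ⟨s, hs, fun x hx y hy hxy => hind x hx y hy (h hxy)⟩

theorem capSeq_anti {X : Type*} [Fintype X] {U V : X → X → ℝ} {n : ℕ}
    (h : senderGraph U n ≤ senderGraph V n) : capSeq V n ≤ capSeq U n :=
  Real.rpow_le_rpow (Nat.cast_nonneg _) (by exact_mod_cast indepNum_anti h) (by positivity)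

/- Both directed sums of `Usym` equal the mean of the two directed sums of `U`,
so if either is nonnegative then so is one of the sums of `U`. -/
theorem senderGraph_le_of_symmetric_part {X : Type*} (U Usym : X → X → ℝ)
    (hUsym : ∀ i j, Usym i j = (U i j + U j i) / 2) (n : ℕ) :
    senderGraph Usym n ≤ senderGraph U n := by
  rintro x y ⟨hne, h⟩
  refine ⟨hne, ?_⟩
  have hmean : ∀ a b : Fin n → X,
      ∑ k, Usym (a k) (b k) = (∑ k, U (a k) (b k) + ∑ k, U (b k) (a k)) / 2 := by
    intro a b
    simp only [hUsym, ← sum_add_distrib, sum_div]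
  rw [hmean, hmean] at h
  by_contra! hc
  rcases h with h | h <;> linarith [hc.1, hc.2]

theorem capacity_le_of_symmetric_part_general {X : Type*} [Fintype X]
    (U : X → X → ℝ)
    (Usym : X → X → ℝ) (hUsym : ∀ i j, Usym i j = (U i j + U j i) / 2) :
    (∀ n, senderGraph Usym n ≤ senderGraph U n) ∧
    ∀ L L' : ℝ, Filter.Tendsto (capSeq U) Filter.atTop (nhds L) →
      Filter.Tendsto (capSeq Usym) Filter.atTop (nhds L') → L ≤ L' := by
  have hle := senderGraph_le_of_symmetric_part U Usym hUsym
  exact ⟨hle, fun L L' hL hL' => le_of_tendsto_of_tendsto' hL hL' fun n => capSeq_anti (hle n)⟩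

/-- The sender graph of the symmetric part `U^Sym` is a subgraph of the sender
graph of `U`, hence `Ξ(U) ≤ Ξ(U^Sym)`. -/
theorem capacity_le_of_symmetric_part {X : Type*} [Fintype X]
    (U : X → X → ℝ) (hdiag : ∀ i, U i i = 0)
    (Usym : X → X → ℝ) (hUsym : ∀ i j, Usym i j = (U i j + U j i) / 2) :
    (∀ n, senderGraph Usym n ≤ senderGraph U n) ∧
    ∀ L L' : ℝ, Filter.Tendsto (capSeq U) Filter.atTop (nhds L) →
      Filter.Tendsto (capSeq Usym) Filter.atTop (nhds L') → L ≤ L' :=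
  capacity_le_of_symmetric_part_general U Usym hUsym
end

section
/- Let 𝒰 be a symmetric utility (𝒰(i,j) = 𝒰(j,i)) with zero diagonal, inducing base sender graph G_s. Then for every n, the strong power G_s^{⊠n} is a subgraph of the sender graph G_sⁿ on 𝒳ⁿ, hence α(G_sⁿ) ≤ α(G_s^{⊠n}) and Ξ(𝒰) ≤ Θ(G_s). -/
open Finset Filter Real Topology

theorem strongPow_baseGraph_le_senderGraph {X : Type*} {U : X → X → ℝ}
    (hdiag : ∀ i, U i i = 0) (hsym : ∀ i j, U i j = U j i) (n : ℕ) :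
    strongPow (baseGraph U) n ≤ senderGraph U n := by
  intro x y ⟨hne, hcoord⟩
  refine ⟨hne, Or.inl (Finset.sum_nonneg fun k _ => ?_)⟩
  rcases hcoord k with heq | ⟨-, hxy | hyx⟩
  · rw [heq, hdiag]
  · rwa [hsym]
  · exact hyx

theorem indepNum_anti_s13 {V : Type*} [Finite V] : Antitone (indepNum : SimpleGraph V → ℕ) := by
  intro G H hle
  have := Fintype.ofFinite V
  refine csSup_le_csSup ⟨Fintype.card V, ?_⟩ ⟨0, ∅, rfl, by simp⟩ ?_
  · rintro m ⟨s, rfl, -⟩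
    exact s.card_le_univ
  · rintro m ⟨s, rfl, hs⟩
    exact ⟨s, rfl, fun x hx y hy hadj => hs x hx y hy (hle hadj)⟩

/-- For a symmetric utility, the strong power `G_s^{⊠n}` of the base sender
graph is a subgraph of the sender graph `G_s^n`, hence
`α(G_s^n) ≤ α(G_s^{⊠n})` and `Ξ(U) ≤ Θ(G_s)`. -/
theorem capacity_le_shannon_of_symmetric {X : Type*} [Fintype X]
    (U : X → X → ℝ) (hdiag : ∀ i, U i i = 0) (hsym : ∀ i j, U i j = U j i) :
    (∀ n, strongPow (baseGraph U) n ≤ senderGraph U n) ∧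
    (∀ n, indepNum (senderGraph U n) ≤ indepNum (strongPow (baseGraph U) n)) ∧
    ∀ L Th : ℝ, Filter.Tendsto (capSeq U) Filter.atTop (nhds L) →
      Filter.Tendsto
        (fun n : ℕ => (indepNum (strongPow (baseGraph U) n) : ℝ) ^ (1 / (n : ℝ)))
        Filter.atTop (nhds Th) → L ≤ Th := by
  have hsub := strongPow_baseGraph_le_senderGraph hdiag hsym
  have hα n : indepNum (senderGraph U n) ≤ indepNum (strongPow (baseGraph U) n) :=
    indepNum_anti_s13 (hsub n)
  refine ⟨hsub, hα, fun L Th hL hTh => le_of_tendsto_of_tendsto' hL hTh fun n => ?_⟩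
  exact Real.rpow_le_rpow (by positivity) (by exact_mod_cast hα n) (by positivity)
end

section
/- Let 𝒳₁, 𝒳₂ be finite alphabets with utilities 𝒰¹, 𝒰² (zero diagonals), and define 𝒰 on 𝒳 = 𝒳₁ × 𝒳₂ by 𝒰((i₁,i₂),(j₁,j₂)) = (𝒰¹(i₁,j₁) + 𝒰²(i₂,j₂))/2. Then for each n, the Cartesian product of an independent set of the sender graph of 𝒰¹ on 𝒳₁ⁿ with an independent set of the sender graph of 𝒰² on 𝒳₂ⁿ is an independent set of the sender graph of 𝒰 on 𝒳ⁿ. Consequently Ξ(𝒰) ≥ Ξ(𝒰¹) · Ξ(𝒰²). -/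
/-!
Two words are non-adjacent in a sender graph exactly when they are equal or the total utility
is negative in both directions; with zero diagonals the total utility between equal words is `0`.
So for distinct `(x, u)`, `(y, v)` built from independent sets, both component sums are `≤ 0` and
at least one is `< 0`, whence their average is negative in both directions. The product of two
independent sets is therefore independent, `α(U₁, n) · α(U₂, n) ≤ α(U, n)`, and taking `n`-th
roots and limits gives `Ξ(U₁) · Ξ(U₂) ≤ Ξ(U)`.
-/

open Finset Filter Real Topology

section SenderGraph

variable {X : Type*} {W : X → X → ℝ} {n : ℕ}

lemma sum_neg_of_not_senderGraph_adj {x y : Fin n → X} (hne : x ≠ y)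
    (h : ¬ (senderGraph W n).Adj x y) : ∑ k, W (y k) (x k) < 0 :=
  not_le.mp (not_or.mp (not_and.mp h hne)).1

lemma sum_nonpos_of_not_senderGraph_adj (hW : ∀ i, W i i = 0) {x y : Fin n → X}
    (h : ¬ (senderGraph W n).Adj x y) : ∑ k, W (y k) (x k) ≤ 0 := by
  by_cases hxy : x = y
  · simp [hxy, hW]
  · exact (sum_neg_of_not_senderGraph_adj hxy h).le

end SenderGraph

section ProductUtility

variable {X1 X2 : Type*} {U1 : X1 → X1 → ℝ} {U2 : X2 → X2 → ℝ} {U : X1 × X2 → X1 × X2 → ℝ}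
  {n : ℕ}

lemma sum_prodUtility (hU : ∀ p q : X1 × X2, U p q = (U1 p.1 q.1 + U2 p.2 q.2) / 2)
    (w w' : Fin n → X1 × X2) :
    ∑ k, U (w k) (w' k) = (∑ k, U1 (w k).1 (w' k).1 + ∑ k, U2 (w k).2 (w' k).2) / 2 := by
  simp only [hU, ← Finset.sum_div, Finset.sum_add_distrib]

lemma sum_prodUtility_neg (h1 : ∀ i, U1 i i = 0) (h2 : ∀ i, U2 i i = 0)
    (hU : ∀ p q : X1 × X2, U p q = (U1 p.1 q.1 + U2 p.2 q.2) / 2)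
    {z z' : Fin n → X1 × X2} (hne : z ≠ z')
    (hn1 : ¬ (senderGraph U1 n).Adj (fun k => (z k).1) (fun k => (z' k).1))
    (hn2 : ¬ (senderGraph U2 n).Adj (fun k => (z k).2) (fun k => (z' k).2)) :
    ∑ k, U (z' k) (z k) < 0 := by
  rw [sum_prodUtility hU]
  have hle1 := sum_nonpos_of_not_senderGraph_adj h1 hn1
  have hle2 := sum_nonpos_of_not_senderGraph_adj h2 hn2
  have hcomp : (fun k => (z k).1) ≠ (fun k => (z' k).1) ∨
      (fun k => (z k).2) ≠ (fun k => (z' k).2) := by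
    contrapose! hne
    exact funext fun k => Prod.ext (congrFun hne.1 k) (congrFun hne.2 k)
  rcases hcomp with hne1 | hne2
  · linarith [sum_neg_of_not_senderGraph_adj hne1 hn1]
  · linarith [sum_neg_of_not_senderGraph_adj hne2 hn2]

lemma senderGraph_prodUtility_not_adj (h1 : ∀ i, U1 i i = 0) (h2 : ∀ i, U2 i i = 0)
    (hU : ∀ p q : X1 × X2, U p q = (U1 p.1 q.1 + U2 p.2 q.2) / 2)
    {z z' : Fin n → X1 × X2}
    (hn1 : ¬ (senderGraph U1 n).Adj (fun k => (z k).1) (fun k => (z' k).1))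
    (hn2 : ¬ (senderGraph U2 n).Adj (fun k => (z k).2) (fun k => (z' k).2)) :
    ¬ (senderGraph U n).Adj z z' := by
  rintro ⟨hne, hpos | hpos⟩
  · exact (sum_prodUtility_neg h1 h2 hU hne hn1 hn2).not_ge hpos
  · rw [SimpleGraph.adj_comm] at hn1 hn2
    exact (sum_prodUtility_neg h1 h2 hU hne.symm hn1 hn2).not_ge hpos

end ProductUtility

section IndepNum

variable {V : Type*} [Fintype V]

lemma bddAbove_indepSet_cards (G : SimpleGraph V) :
    BddAbove {m | ∃ s : Finset V, s.card = m ∧ ∀ x ∈ s, ∀ y ∈ s, ¬ G.Adj x y} :=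
  ⟨Fintype.card V, fun _ ⟨s, hs, _⟩ => hs ▸ s.card_le_univ⟩

lemma exists_card_eq_indepNum (G : SimpleGraph V) :
    ∃ s : Finset V, s.card = indepNum G ∧ ∀ x ∈ s, ∀ y ∈ s, ¬ G.Adj x y := by
  refine Nat.sSup_mem ?_ (bddAbove_indepSet_cards G)
  exact ⟨0, ∅, rfl, by simp⟩

lemma card_le_indepNum (G : SimpleGraph V) {s : Finset V}
    (hs : ∀ x ∈ s, ∀ y ∈ s, ¬ G.Adj x y) : s.card ≤ indepNum G :=
  le_csSup (bddAbove_indepSet_cards G) ⟨s, rfl, hs⟩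

lemma indepNum_mul_le_of_embedding {V1 V2 : Type*} [Fintype V1] [Fintype V2]
    (G1 : SimpleGraph V1) (G2 : SimpleGraph V2) (G : SimpleGraph V)
    (f : V1 × V2 ↪ V)
    (hf : ∀ p q, ¬ G1.Adj p.1 q.1 → ¬ G2.Adj p.2 q.2 → ¬ G.Adj (f p) (f q)) :
    indepNum G1 * indepNum G2 ≤ indepNum G := by
  obtain ⟨s1, hcard1, hs1⟩ := exists_card_eq_indepNum G1
  obtain ⟨s2, hcard2, hs2⟩ := exists_card_eq_indepNum G2
  have hind : ∀ x ∈ (s1 ×ˢ s2).map f, ∀ y ∈ (s1 ×ˢ s2).map f, ¬ G.Adj x y := by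
    simp only [Finset.mem_map, Finset.mem_product]
    rintro _ ⟨p, ⟨hp1, hp2⟩, rfl⟩ _ ⟨q, ⟨hq1, hq2⟩, rfl⟩
    exact hf p q (hs1 _ hp1 _ hq1) (hs2 _ hp2 _ hq2)
  simpa [hcard1, hcard2] using card_le_indepNum G hind

end IndepNum

lemma capSeq_mul_le {X1 X2 : Type*} [Fintype X1] [Fintype X2]
    {U1 : X1 → X1 → ℝ} {U2 : X2 → X2 → ℝ} {U : X1 × X2 → X1 × X2 → ℝ}
    (h1 : ∀ i, U1 i i = 0) (h2 : ∀ i, U2 i i = 0)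
    (hU : ∀ p q : X1 × X2, U p q = (U1 p.1 q.1 + U2 p.2 q.2) / 2) (n : ℕ) :
    capSeq U1 n * capSeq U2 n ≤ capSeq U n := by
  have hα : indepNum (senderGraph U1 n) * indepNum (senderGraph U2 n) ≤
      indepNum (senderGraph U n) :=
    indepNum_mul_le_of_embedding _ _ _ (Equiv.arrowProdEquivProdArrow _ _ _).symm.toEmbedding
      fun _ _ hn1 hn2 => senderGraph_prodUtility_not_adj h1 h2 hU hn1 hn2
  unfold capSeq
  rw [← Real.mul_rpow (by positivity) (by positivity), ← Nat.cast_mul]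
  gcongr

/-- For the product alphabet `X₁ × X₂` with utility
`U((i₁,i₂),(j₁,j₂)) = (U₁(i₁,j₁) + U₂(i₂,j₂))/2`, the Cartesian product of
independent sets of the component sender graphs is independent in the sender
graph of `U`; hence `Ξ(U) ≥ Ξ(U₁) · Ξ(U₂)`. -/
theorem capacity_product_ge {X1 X2 : Type*} [Fintype X1] [Fintype X2]
    (U1 : X1 → X1 → ℝ) (U2 : X2 → X2 → ℝ)
    (h1 : ∀ i, U1 i i = 0) (h2 : ∀ i, U2 i i = 0)
    (U : X1 × X2 → X1 × X2 → ℝ)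
    (hU : ∀ p q : X1 × X2, U p q = (U1 p.1 q.1 + U2 p.2 q.2) / 2) :
    (∀ n : ℕ, ∀ S1 : Set (Fin n → X1), ∀ S2 : Set (Fin n → X2),
      (∀ x ∈ S1, ∀ y ∈ S1, ¬ (senderGraph U1 n).Adj x y) →
      (∀ x ∈ S2, ∀ y ∈ S2, ¬ (senderGraph U2 n).Adj x y) →
      ∀ z z' : Fin n → X1 × X2,
        ((fun k => (z k).1) ∈ S1 ∧ (fun k => (z k).2) ∈ S2) →
        ((fun k => (z' k).1) ∈ S1 ∧ (fun k => (z' k).2) ∈ S2) →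
        ¬ (senderGraph U n).Adj z z') ∧
    ∀ L L1 L2 : ℝ,
      Filter.Tendsto (capSeq U) Filter.atTop (nhds L) →
      Filter.Tendsto (capSeq U1) Filter.atTop (nhds L1) →
      Filter.Tendsto (capSeq U2) Filter.atTop (nhds L2) →
      L1 * L2 ≤ L :=
  ⟨fun _ _ _ hS1 hS2 _ _ hz hz' =>
      senderGraph_prodUtility_not_adj h1 h2 hU (hS1 _ hz.1 _ hz'.1) (hS2 _ hz.2 _ hz'.2),
    fun _ _ _ hT hT1 hT2 => le_of_tendsto_of_tendsto' (hT1.mul hT2) hT (capSeq_mul_le h1 h2 hU)⟩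
end
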